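/- arXiv:1512.01748 — 4 statements merged into one kernel-verified Lean document; each statement's English description precedes it below -/
import Mathlib

section
/- Let A be a real m×n matrix admitting a singular value decomposition A = U Σ Vᵀ, where U is an m×m orthogonal matrix, V is an n×n orthogonal matrix, and Σ is the m×n rectangular diagonal matrix with diagonal entries σ₁ ≥ σ₂ ≥ ⋯ ≥ σ_min(m,n) ≥ 0. For a given integer K with 1 ≤ K ≤ min(m,n), the truncated matrix X* = Σ_{k=1}^{K} σ_k u_k v_kᵀ (where u_k, v_k are the k-th columns of U and V) satisfies rank(X*) ≤ K and ‖A − X*‖_F ≤ ‖A − X‖_F for every m×n real matrix X with rank(X) ≤ K. -/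
/-!
Conjugating by the orthogonal matrices `U` and `V` preserves the Frobenius norm and turns `A`
into `Σ`, the truncated SVD into `Σ` with all but its first `K` diagonal entries zeroed, and a
competitor `X` of rank at most `K` into another such matrix `Y`. So it suffices to show
`∑_{k ≥ K} σ_k² ≤ ‖Σ - Y‖_F²`, and restricting to the leading `min m n` square block we may
assume `Σ` is square.

Let `P` be the orthogonal projection onto the column space of `Y`. Column `k` of `Σ - Y` is
`σ_k e_k` minus a vector in the range of `P`, so its squared length is at least
`σ_k² (1 - ‖P e_k‖²)`. The weights `‖P e_k‖²` lie in `[0, 1]` and add up to `tr P = rank Y ≤ K`,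
and against the nonincreasing `σ_k²` such weights give at most `∑_{k < K} σ_k²`.
-/

open Matrix

noncomputable def frob {m n : ℕ} (M : Matrix (Fin m) (Fin n) ℝ) : ℝ :=
  Real.sqrt (∑ i, ∑ j, (M i j) ^ 2)

open Finset

section Frobenius

variable {m n : ℕ}

theorem frob_nonneg (M : Matrix (Fin m) (Fin n) ℝ) : 0 ≤ frob M := Real.sqrt_nonneg _

theorem frob_sq (M : Matrix (Fin m) (Fin n) ℝ) : frob M ^ 2 = ∑ i, ∑ j, M i j ^ 2 :=
  Real.sq_sqrt (by positivity)

theorem sum_sq_eq_trace_transpose_mul (M : Matrix (Fin m) (Fin n) ℝ) :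
    ∑ i, ∑ j, M i j ^ 2 = trace (Mᵀ * M) := by
  rw [sum_comm]
  simp [trace, mul_apply, sq]

theorem frob_mul_mul_transpose {U : Matrix (Fin m) (Fin m) ℝ} {V : Matrix (Fin n) (Fin n) ℝ}
    (hU : Uᵀ * U = 1) (hV : Vᵀ * V = 1) (M : Matrix (Fin m) (Fin n) ℝ) :
    frob (U * M * Vᵀ) = frob M := by
  have hgram : (U * M * Vᵀ)ᵀ * (U * M * Vᵀ) = V * (Mᵀ * M) * Vᵀ := by
    simp only [transpose_mul, transpose_transpose, Matrix.mul_assoc, ← Matrix.mul_assoc Uᵀ, hU,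
      Matrix.one_mul]
  rw [frob, frob, sum_sq_eq_trace_transpose_mul, sum_sq_eq_trace_transpose_mul, hgram,
    trace_mul_cycle, ← Matrix.mul_assoc, hV, Matrix.one_mul]

theorem frob_mul_mul_transpose_sub {U : Matrix (Fin m) (Fin m) ℝ} {V : Matrix (Fin n) (Fin n) ℝ}
    (hU : Uᵀ * U = 1) (hV : Vᵀ * V = 1) (S X : Matrix (Fin m) (Fin n) ℝ) :
    frob (U * S * Vᵀ - X) = frob (S - Uᵀ * X * V) := by
  have hX : X = U * (Uᵀ * X * V) * Vᵀ := by
    simp only [Matrix.mul_assoc, mul_eq_one_comm.mp hV, Matrix.mul_one, ← Matrix.mul_assoc U,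
      mul_eq_one_comm.mp hU, Matrix.one_mul]
  rw [hX, ← Matrix.sub_mul, ← Matrix.mul_sub, frob_mul_mul_transpose hU hV, ← hX]

theorem sum_comp_le_sum_of_injective {ι κ M : Type*} [Fintype ι] [Fintype κ] [AddCommMonoid M]
    [Preorder M] [AddLeftMono M] {e : ι → κ} (he : Function.Injective e) {f : κ → M}
    (hf : 0 ≤ f) : ∑ i, f (e i) ≤ ∑ k, f k :=
  calc ∑ i, f (e i) = ∑ k ∈ univ.map ⟨e, he⟩, f k := (sum_map univ ⟨e, he⟩ f).symm
    _ ≤ ∑ k, f k := sum_le_sum_of_subset_of_nonneg (subset_univ _) fun k _ _ => hf k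

theorem frob_submatrix_le {p q : ℕ} (M : Matrix (Fin m) (Fin n) ℝ) {r : Fin p → Fin m}
    {c : Fin q → Fin n} (hr : Function.Injective r) (hc : Function.Injective c) :
    frob (M.submatrix r c) ≤ frob M := by
  refine Real.sqrt_le_sqrt ?_
  calc ∑ i, ∑ j, M (r i) (c j) ^ 2 ≤ ∑ i, ∑ j, M (r i) j ^ 2 :=
        sum_le_sum fun i _ => sum_comp_le_sum_of_injective hc fun j => sq_nonneg _
    _ ≤ ∑ i, ∑ j, M i j ^ 2 :=
        sum_comp_le_sum_of_injective hr fun i => sum_nonneg fun j _ => sq_nonneg _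

theorem frob_sq_eq_sum_norm_sq_toLpLin (M : Matrix (Fin m) (Fin n) ℝ) :
    frob M ^ 2 = ∑ j, ‖toLpLin 2 2 M (EuclideanSpace.single j 1)‖ ^ 2 := by
  rw [frob_sq, sum_comm]
  refine sum_congr rfl fun j _ => ?_
  rw [EuclideanSpace.norm_sq_eq]
  simp [toLpLin_apply]

end Frobenius

section Projection

variable {E : Type*} [NormedAddCommGroup E] [InnerProductSpace ℝ E]

theorem Submodule.norm_sq_sub_norm_sq_starProjection_le (W : Submodule ℝ E)
    [W.HasOrthogonalProjection] (x : E) {y : E} (hy : y ∈ W) :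
    ‖x‖ ^ 2 - ‖W.starProjection x‖ ^ 2 ≤ ‖x - y‖ ^ 2 := by
  have hperp : inner ℝ (x - W.starProjection x) (W.starProjection x - y) = 0 :=
    W.starProjection_inner_eq_zero x _ (W.sub_mem (W.starProjection_apply_mem x) hy)
  have hsplit := norm_add_sq_eq_norm_sq_add_norm_sq_real hperp
  rw [sub_add_sub_cancel] at hsplit
  have hpyth := W.norm_sq_eq_add_norm_sq_starProjection x
  rw [Submodule.starProjection_orthogonal_val] at hpyth
  nlinarith [mul_self_nonneg ‖W.starProjection x - y‖]

theorem Submodule.sum_norm_sq_starProjection_eq_finrank [FiniteDimensional ℝ E]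
    {ι : Type*} [Fintype ι] (W : Submodule ℝ E) (b : OrthonormalBasis ι ℝ E) :
    ∑ i, ‖W.starProjection (b i)‖ ^ 2 = Module.finrank ℝ W := by
  have hproj : LinearMap.IsProj W (W.starProjection : E →ₗ[ℝ] E) :=
    ⟨W.starProjection_apply_mem, fun x hx => W.starProjection_eq_self_iff.mpr hx⟩
  rw [← hproj.trace, LinearMap.trace_eq_sum_inner _ b]
  refine Fintype.sum_congr _ _ fun i => ?_
  rw [← real_inner_self_eq_norm_sq, W.inner_starProjection_left_eq_right,
    W.starProjection_eq_self_iff.mpr (W.starProjection_apply_mem _)]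
  rfl

end Projection

theorem sum_mul_le_sum_range_of_antitoneOn {c b : ℕ → ℝ} {K N : ℕ} (hKN : K ≤ N)
    (hc : AntitoneOn c (Set.Iio N)) (hc0 : ∀ i < N, 0 ≤ c i)
    (hb0 : ∀ i, 0 ≤ b i) (hb1 : ∀ i < K, b i ≤ 1) (hb : ∑ i ∈ range N, b i ≤ K) :
    ∑ i ∈ range N, c i * b i ≤ ∑ i ∈ range K, c i := by
  -- Comparing `c` with a threshold `t` between its first `K` values and the rest bounds the
  -- difference of the two sides by `t * (∑ b - K) ≤ 0`.
  obtain ⟨t, ht0, hlo, hhi⟩ :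
      ∃ t, 0 ≤ t ∧ (∀ i ∈ range K, t ≤ c i) ∧ ∀ i ∈ Ico K N, c i ≤ t := by
    rcases hKN.lt_or_eq with hlt | rfl
    · refine ⟨c K, hc0 K hlt, fun i hi => ?_, fun i hi => ?_⟩
      · exact hc ((mem_range.1 hi).trans hlt) hlt (mem_range.1 hi).le
      · exact hc hlt (mem_Ico.1 hi).2 (mem_Ico.1 hi).1
    · exact ⟨0, le_rfl, fun i hi => hc0 i (mem_range.1 hi), fun i hi => by simp at hi⟩
  have hhead : ∑ i ∈ range K, c i * b i ≤ ∑ i ∈ range K, (c i - t * (1 - b i)) :=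
    sum_le_sum fun i hi => by nlinarith [hlo i hi, hb1 i (mem_range.1 hi)]
  have htail : ∑ i ∈ Ico K N, c i * b i ≤ ∑ i ∈ Ico K N, t * b i :=
    sum_le_sum fun i hi => mul_le_mul_of_nonneg_right (hhi i hi) (hb0 i)
  rw [← sum_range_add_sum_Ico _ hKN] at hb ⊢
  simp only [sum_sub_distrib, ← mul_sum, sum_const, card_range, nsmul_eq_mul, mul_one]
    at hhead htail
  nlinarith

theorem sum_norm_sq_starProjection_range_toLpLin {κ ι : Type*} [Fintype κ] [DecidableEq κ]
    [Fintype ι] [DecidableEq ι] (Y : Matrix κ ι ℝ) :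
    ∑ i, ‖(LinearMap.range (toLpLin 2 2 Y)).starProjection (EuclideanSpace.single i 1)‖ ^ 2 =
      Y.rank := by
  simp_rw [← EuclideanSpace.basisFun_apply]
  rw [Submodule.sum_norm_sq_starProjection_eq_finrank,
    rank_eq_finrank_range_toLin Y (PiLp.basisFun 2 ℝ _) (PiLp.basisFun 2 ℝ _)]
  rfl

theorem sq_mul_one_sub_le_norm_sq_toLpLin_diagonal_sub {N : ℕ} (d : Fin N → ℝ)
    (Y : Matrix (Fin N) (Fin N) ℝ) (j : Fin N) :
    d j ^ 2 * (1 - ‖(LinearMap.range (toLpLin 2 2 Y)).starProjection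
        (EuclideanSpace.single j 1)‖ ^ 2) ≤
      ‖toLpLin 2 2 (diagonal d - Y) (EuclideanSpace.single j 1)‖ ^ 2 := by
  have hdiag : toLpLin 2 2 (diagonal d) (EuclideanSpace.single j 1) =
      d j • EuclideanSpace.single j 1 := by
    ext i
    by_cases h : i = j <;> simp [toLpLin_apply, h]
  rw [map_sub, LinearMap.sub_apply, hdiag]
  refine le_trans (le_of_eq ?_) (Submodule.norm_sq_sub_norm_sq_starProjection_le _ _
    (LinearMap.mem_range_self _ _))
  simp [norm_smul, mul_pow]
  ring

theorem sum_Ico_sq_le_frob_sq_diagonal_sub {N K : ℕ} {σ : ℕ → ℝ} (hK : K ≤ N)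
    (hσ : AntitoneOn σ (Set.Iio N)) (hσ0 : ∀ k < N, 0 ≤ σ k) {Y : Matrix (Fin N) (Fin N) ℝ}
    (hY : Y.rank ≤ K) :
    ∑ k ∈ Ico K N, σ k ^ 2 ≤ frob (diagonal (fun i : Fin N => σ i) - Y) ^ 2 := by
  set P := (LinearMap.range (toLpLin 2 2 Y)).starProjection
  set b : ℕ → ℝ := fun k => if h : k < N then ‖P (EuclideanSpace.single ⟨k, h⟩ 1)‖ ^ 2 else 0
  have hb0 (k : ℕ) : 0 ≤ b k := by
    dsimp only [b]; split <;> positivity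
  have hb1 (k : ℕ) : b k ≤ 1 := by
    dsimp only [b]; split
    · refine pow_le_one₀ (norm_nonneg _) ((Submodule.norm_starProjection_apply_le _ _).trans_eq ?_)
      simp
    · exact zero_le_one
  have hb : ∑ k ∈ range N, b k ≤ K :=
    calc ∑ k ∈ range N, b k = ∑ i : Fin N, ‖P (EuclideanSpace.single i 1)‖ ^ 2 := by
          rw [← Fin.sum_univ_eq_sum_range]
          simp [b]
      _ = Y.rank := sum_norm_sq_starProjection_range_toLpLin Y
      _ ≤ K := by exact_mod_cast hY
  have hσsq : AntitoneOn (fun k => σ k ^ 2) (Set.Iio N) := fun i hi j hj hij =>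
    pow_le_pow_left₀ (hσ0 j hj) (hσ hi hj hij) 2
  have hweighted := sum_mul_le_sum_range_of_antitoneOn hK hσsq (fun k _ => sq_nonneg (σ k))
    hb0 (fun k _ => hb1 k) hb
  calc ∑ k ∈ Ico K N, σ k ^ 2 = ∑ k ∈ range N, σ k ^ 2 - ∑ k ∈ range K, σ k ^ 2 := by
        rw [← sum_range_add_sum_Ico _ hK]; ring
    _ ≤ ∑ k ∈ range N, σ k ^ 2 * (1 - b k) := by
        simp only [mul_sub, mul_one, sum_sub_distrib]; linarith
    _ = ∑ j : Fin N, σ j ^ 2 * (1 - b j) :=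
        (Fin.sum_univ_eq_sum_range (fun k => σ k ^ 2 * (1 - b k)) N).symm
    _ ≤ _ := by
        rw [frob_sq_eq_sum_norm_sq_toLpLin]
        exact sum_le_sum fun j _ => by
          simpa [b] using sq_mul_one_sub_le_norm_sq_toLpLin_diagonal_sub (fun i : Fin N => σ i) Y j

theorem Matrix.rank_sum_vecMulVec_le {R : Type*} [CommRing R] [StrongRankCondition R]
    {m n : Type*} [Fintype n] {K : ℕ} (u : Fin K → m → R) (v : Fin K → n → R) :
    (∑ k, vecMulVec (u k) (v k)).rank ≤ K := by
  have hfactor : ∑ k, vecMulVec (u k) (v k) = (of fun i k => u k i) * of v := by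
    ext i j
    simp [mul_apply, vecMulVec_apply, Matrix.sum_apply]
  rw [hfactor]
  exact (rank_mul_le_left _ _).trans (rank_le_card_width _ |>.trans_eq (Fintype.card_fin K))

def rectDiag {R : Type*} [Zero R] (m n : ℕ) (τ : ℕ → R) : Matrix (Fin m) (Fin n) R :=
  of fun i j => if (i : ℕ) = j then τ i else 0

noncomputable def truncatedSVD {m n K : ℕ} (U : Matrix (Fin m) (Fin m) ℝ)
    (V : Matrix (Fin n) (Fin n) ℝ) (σ : ℕ → ℝ) (hKm : K ≤ m) (hKn : K ≤ n) :
    Matrix (Fin m) (Fin n) ℝ :=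
  ∑ k : Fin K, σ k • vecMulVec (fun i => U i (Fin.castLE hKm k)) (fun j => V j (Fin.castLE hKn k))

section RectDiag

variable {m n : ℕ}

theorem rectDiag_sub {R : Type*} [AddGroup R] (τ τ' : ℕ → R) :
    rectDiag m n τ - rectDiag m n τ' = rectDiag m n (τ - τ') := by
  ext i j
  by_cases h : (i : ℕ) = j <;> simp [rectDiag, h]

theorem frob_sq_rectDiag (τ : ℕ → ℝ) :
    frob (rectDiag m n τ) ^ 2 = ∑ k ∈ range (min m n), τ k ^ 2 := by
  rw [frob_sq]
  simp only [rectDiag, of_apply, ite_pow, ne_eq, OfNat.ofNat_ne_zero, not_false_eq_true, zero_pow]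
  calc ∑ i : Fin m, ∑ j : Fin n, (if (i : ℕ) = j then τ i ^ 2 else 0)
      = ∑ i : Fin m, if (i : ℕ) < n then τ i ^ 2 else 0 := by
        refine sum_congr rfl fun i _ => ?_
        rw [Fin.sum_univ_eq_sum_range (fun k => if (i : ℕ) = k then τ i ^ 2 else 0) n, sum_ite_eq]
        simp only [mem_range]
    _ = ∑ k ∈ range m, if k < n then τ k ^ 2 else 0 :=
        Fin.sum_univ_eq_sum_range (fun k => if k < n then τ k ^ 2 else 0) m
    _ = ∑ k ∈ range (min m n), τ k ^ 2 := by
        rw [← sum_filter]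
        congr 1
        ext k
        simp

theorem frob_sq_rectDiag_sub_truncate {K : ℕ} (σ : ℕ → ℝ) (hK : K ≤ min m n) :
    frob (rectDiag m n σ - rectDiag m n (fun k => if k < K then σ k else 0)) ^ 2 =
      ∑ k ∈ Ico K (min m n), σ k ^ 2 := by
  rw [rectDiag_sub, frob_sq_rectDiag, ← sum_range_add_sum_Ico _ hK]
  refine (add_eq_right.2 (sum_eq_zero fun k hk => ?_)).trans (sum_congr rfl fun k hk => ?_)
  · simp [mem_range.1 hk]
  · simp [not_lt.2 (mem_Ico.1 hk).1]

theorem rank_truncatedSVD_le {K : ℕ} (U : Matrix (Fin m) (Fin m) ℝ) (V : Matrix (Fin n) (Fin n) ℝ)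
    (σ : ℕ → ℝ) (hKm : K ≤ m) (hKn : K ≤ n) : (truncatedSVD U V σ hKm hKn).rank ≤ K := by
  simp_rw [truncatedSVD, ← smul_vecMulVec]
  exact rank_sum_vecMulVec_le _ _

theorem transpose_mul_truncatedSVD_mul {K : ℕ} {U : Matrix (Fin m) (Fin m) ℝ}
    {V : Matrix (Fin n) (Fin n) ℝ} (hU : Uᵀ * U = 1) (hV : Vᵀ * V = 1) (σ : ℕ → ℝ)
    (hKm : K ≤ m) (hKn : K ≤ n) :
    Uᵀ * truncatedSVD U V σ hKm hKn * V = rectDiag m n (fun k => if k < K then σ k else 0) := by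
  have hUcol (p : Fin m) :
      Uᵀ *ᵥ (fun i => U i p) = fun i => (1 : Matrix (Fin m) (Fin m) ℝ) i p := by
    rw [← hU]; rfl
  have hVcol (q : Fin n) :
      (fun j => V j q) ᵥ* V = fun j => (1 : Matrix (Fin n) (Fin n) ℝ) q j := by
    rw [← hV]; rfl
  rw [truncatedSVD, Matrix.mul_sum, Matrix.sum_mul]
  simp only [Matrix.mul_smul, Matrix.smul_mul, mul_vecMulVec, vecMulVec_mul, hUcol, hVcol]
  ext i j
  simp only [rectDiag, of_apply, Matrix.sum_apply, Matrix.smul_apply, vecMulVec_apply, one_apply,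
    Fin.ext_iff, Fin.val_castLE, smul_eq_mul]
  rw [Fin.sum_univ_eq_sum_range
    (fun k => σ k * ((if (i : ℕ) = k then 1 else 0) * if k = (j : ℕ) then 1 else 0)) K]
  by_cases h : (i : ℕ) = j <;> simp [mul_ite, h]

theorem sum_Ico_sq_le_frob_sq_rectDiag_sub {K : ℕ} {σ : ℕ → ℝ} (hK : K ≤ min m n)
    (hσ : AntitoneOn σ (Set.Iio (min m n))) (hσ0 : ∀ k < min m n, 0 ≤ σ k)
    {Y : Matrix (Fin m) (Fin n) ℝ} (hY : Y.rank ≤ K) :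
    ∑ k ∈ Ico K (min m n), σ k ^ 2 ≤ frob (rectDiag m n σ - Y) ^ 2 := by
  let r : Fin (min m n) → Fin m := Fin.castLE (min_le_left m n)
  let c : Fin (min m n) → Fin n := Fin.castLE (min_le_right m n)
  have hsub : (rectDiag m n σ - Y).submatrix r c =
      diagonal (fun i : Fin (min m n) => σ i) - Y.submatrix r c := by
    ext i j
    by_cases h : i = j <;> simp [r, c, rectDiag, diagonal, h, Fin.ext_iff]
  calc _ ≤ frob (diagonal (fun i : Fin (min m n) => σ i) - Y.submatrix r c) ^ 2 :=
        sum_Ico_sq_le_frob_sq_diagonal_sub hK hσ hσ0 ((rank_submatrix_le _ _ _).trans hY)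
    _ ≤ frob (rectDiag m n σ - Y) ^ 2 := by
        rw [← hsub]
        exact pow_le_pow_left₀ (frob_nonneg _)
          (frob_submatrix_le _ (Fin.castLE_injective _) (Fin.castLE_injective _)) 2

end RectDiag

theorem eckart_young_mirsky_existence_general {m n : ℕ}
    (A : Matrix (Fin m) (Fin n) ℝ)
    (U : Matrix (Fin m) (Fin m) ℝ) (V : Matrix (Fin n) (Fin n) ℝ)
    (S : Matrix (Fin m) (Fin n) ℝ) (σ : ℕ → ℝ) (K : ℕ)
    (hU : Uᵀ * U = 1) (hV : Vᵀ * V = 1)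
    (hA : A = U * S * Vᵀ)
    (hS : ∀ (i : Fin m) (j : Fin n), S i j = if (i : ℕ) = (j : ℕ) then σ (i : ℕ) else 0)
    (hσmono : ∀ i j : ℕ, i ≤ j → j < min m n → σ j ≤ σ i)
    (hσnonneg : ∀ i : ℕ, i < min m n → 0 ≤ σ i)
    (hK : K ≤ min m n)
    (Xstar : Matrix (Fin m) (Fin n) ℝ)
    (hXstar : Xstar = ∑ k : Fin K,
      σ (k : ℕ) •
        Matrix.vecMulVec
          (fun i => U i ⟨(k : ℕ), lt_of_lt_of_le k.2 (hK.trans (min_le_left m n))⟩)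
          (fun j => V j ⟨(k : ℕ), lt_of_lt_of_le k.2 (hK.trans (min_le_right m n))⟩)) :
    Xstar.rank ≤ K ∧
      ∀ X : Matrix (Fin m) (Fin n) ℝ, X.rank ≤ K →
        frob (A - Xstar) ≤ frob (A - X) := by
  have hKm := hK.trans (min_le_left m n)
  have hKn := hK.trans (min_le_right m n)
  replace hXstar : Xstar = truncatedSVD U V σ hKm hKn := hXstar
  have hS' : S = rectDiag m n σ := by ext i j; exact hS i j
  subst hXstar hA hS'
  refine ⟨rank_truncatedSVD_le U V σ hKm hKn, fun X hX => ?_⟩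
  refine (pow_le_pow_iff_left₀ (frob_nonneg _) (frob_nonneg _) two_ne_zero).mp ?_
  rw [frob_mul_mul_transpose_sub hU hV, frob_mul_mul_transpose_sub hU hV,
    transpose_mul_truncatedSVD_mul hU hV σ hKm hKn, frob_sq_rectDiag_sub_truncate σ hK]
  exact sum_Ico_sq_le_frob_sq_rectDiag_sub hK (fun i _ j hj hij => hσmono i j hij hj) hσnonneg
    ((rank_mul_le_left _ _).trans (rank_mul_le_right _ _) |>.trans hX)

/-- Eckart–Young–Mirsky theorem (existence part): the truncated SVD
`X* = ∑_{k<K} σ_k u_k v_kᵀ` has rank at most `K` and is a best rank-`K`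
approximation of `A` in the Frobenius norm. -/
theorem eckart_young_mirsky_existence {m n : ℕ}
    (A : Matrix (Fin m) (Fin n) ℝ)
    (U : Matrix (Fin m) (Fin m) ℝ) (V : Matrix (Fin n) (Fin n) ℝ)
    (S : Matrix (Fin m) (Fin n) ℝ) (σ : ℕ → ℝ) (K : ℕ)
    (hU : Uᵀ * U = 1) (hV : Vᵀ * V = 1)
    (hA : A = U * S * Vᵀ)
    (hS : ∀ (i : Fin m) (j : Fin n), S i j = if (i : ℕ) = (j : ℕ) then σ (i : ℕ) else 0)
    (hσmono : ∀ i j : ℕ, i ≤ j → j < min m n → σ j ≤ σ i)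
    (hσnonneg : ∀ i : ℕ, i < min m n → 0 ≤ σ i)
    (hK1 : 1 ≤ K) (hK : K ≤ min m n)
    (Xstar : Matrix (Fin m) (Fin n) ℝ)
    (hXstar : Xstar = ∑ k : Fin K,
      σ (k : ℕ) •
        Matrix.vecMulVec
          (fun i => U i ⟨(k : ℕ), lt_of_lt_of_le k.2 (hK.trans (min_le_left m n))⟩)
          (fun j => V j ⟨(k : ℕ), lt_of_lt_of_le k.2 (hK.trans (min_le_right m n))⟩)) :
    Xstar.rank ≤ K ∧
      ∀ X : Matrix (Fin m) (Fin n) ℝ, X.rank ≤ K →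
        frob (A - Xstar) ≤ frob (A - X) :=
  eckart_young_mirsky_existence_general A U V S σ K hU hV hA hS hσmono hσnonneg hK Xstar hXstar
end

section
/- Let A be a real m×n matrix with singular value decomposition A = U Σ Vᵀ, where U, V are orthogonal and Σ has nonincreasing nonnegative diagonal entries σ₁ ≥ σ₂ ≥ ⋯. Let 1 ≤ K < min(m,n) and suppose σ_K > σ_{K+1}. Then the minimizer of ‖A − X‖_F over all m×n real matrices X with rank(X) ≤ K is unique, and it equals X* = Σ_{k=1}^{K} σ_k u_k v_kᵀ. -/
/-!
After the orthogonal change of variables `Y = Uᵀ X V` it suffices to approximate the rectangular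
diagonal matrix `S`. For `Y` of rank at most `K` let `P` be the orthogonal projection onto the
column space of `Y`. Then `‖S - Y‖² = ‖S‖² - ∑ᵢ σᵢ² Pᵢᵢ + ‖P S - Y‖²`, and the diagonal entries
`Pᵢᵢ` lie in `[0, 1]` and sum to `rank Y ≤ K`, so `∑ᵢ σᵢ² Pᵢᵢ ≤ σ₁² + ⋯ + σ_K²`; this is attained
by the truncated SVD. If `σ_K > σ_{K+1}`, equality forces `Pᵢᵢ = 1` for `i ≤ K` and `Pᵢᵢ = 0`
otherwise, so `P` is the coordinate projection and `Y = P S` is the truncation of `S`.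
-/

open Matrix

open Finset

noncomputable def frobSq {m n : Type*} [Fintype m] [Fintype n] (M : Matrix m n ℝ) : ℝ :=
  (Mᵀ * M).trace

section Frobenius

variable {m n : Type*} [Fintype m] [Fintype n]

theorem frobSq_nonneg (M : Matrix m n ℝ) : 0 ≤ frobSq M :=
  (posSemidef_conjTranspose_mul_self M).trace_nonneg

theorem frobSq_eq_zero_iff {M : Matrix m n ℝ} : frobSq M = 0 ↔ M = 0 :=
  trace_conjTranspose_mul_self_eq_zero_iff

theorem frobSq_add {M N : Matrix m n ℝ} (h : (Mᵀ * N).trace = 0) :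
    frobSq (M + N) = frobSq M + frobSq N := by
  have h' : (Nᵀ * M).trace = 0 := by rw [← trace_transpose, transpose_mul, transpose_transpose, h]
  rw [frobSq, frobSq, frobSq, transpose_add, Matrix.add_mul, Matrix.mul_add, Matrix.mul_add,
    trace_add, trace_add, trace_add, h, h']
  ring

theorem frobSq_orthogonal_mul_mul [DecidableEq m] [DecidableEq n] {U : Matrix m m ℝ}
    {V : Matrix n n ℝ} (hU : Uᵀ * U = 1) (hV : Vᵀ * V = 1) (M : Matrix m n ℝ) :
    frobSq (U * M * Vᵀ) = frobSq M := by
  have : (U * M * Vᵀ)ᵀ * (U * M * Vᵀ) = V * (Mᵀ * M * Vᵀ) := by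
    simp only [transpose_mul, transpose_transpose, Matrix.mul_assoc]
    rw [← Matrix.mul_assoc Uᵀ, hU, Matrix.one_mul]
  rw [frobSq, this, trace_mul_comm, Matrix.mul_assoc, hV, Matrix.mul_one, frobSq]

end Frobenius

theorem frob_eq_sqrt_frobSq {m n : ℕ} (M : Matrix (Fin m) (Fin n) ℝ) : frob M = √(frobSq M) := by
  simp only [frob, frobSq, trace, Matrix.diag, mul_apply, transpose_apply, sq]
  rw [Finset.sum_comm]

theorem frob_le_frob_iff {m n : ℕ} {M N : Matrix (Fin m) (Fin n) ℝ} :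
    frob M ≤ frob N ↔ frobSq M ≤ frobSq N := by
  rw [frob_eq_sqrt_frobSq, frob_eq_sqrt_frobSq, Real.sqrt_le_sqrt_iff (frobSq_nonneg N)]

theorem frob_orthogonal_mul_mul {m n : ℕ} {U : Matrix (Fin m) (Fin m) ℝ}
    {V : Matrix (Fin n) (Fin n) ℝ} (hU : Uᵀ * U = 1) (hV : Vᵀ * V = 1)
    (M : Matrix (Fin m) (Fin n) ℝ) : frob (U * M * Vᵀ) = frob M := by
  rw [frob_eq_sqrt_frobSq, frob_eq_sqrt_frobSq, frobSq_orthogonal_mul_mul hU hV]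

section Threshold

variable {ι : Type*} [DecidableEq ι] {w q : ι → ℝ} {s : Finset ι} {c : ℝ}

-- The threshold `c` acts as a Lagrange multiplier for the constraint `∑ i, q i ≤ #s`.
theorem sum_sub_mul_sub_ite_mem [Fintype ι] (w q : ι → ℝ) (s : Finset ι) (c : ℝ) :
    ∑ i, (w i - c) * (q i - if i ∈ s then 1 else 0) =
      (∑ i, w i * q i - ∑ i ∈ s, w i) - c * (∑ i, q i - #s) := by
  simp only [mul_sub, sub_mul, Finset.sum_sub_distrib, mul_ite, mul_one, mul_zero,
    Finset.sum_ite_mem, Finset.univ_inter, ← Finset.mul_sum, Finset.sum_const, nsmul_eq_mul]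
  ring

theorem sub_mul_sub_ite_mem_nonpos (hs : ∀ i ∈ s, c ≤ w i) (hsc : ∀ i ∉ s, w i ≤ c)
    (hq0 : ∀ i, 0 ≤ q i) (hq1 : ∀ i, q i ≤ 1) (i : ι) :
    (w i - c) * (q i - if i ∈ s then 1 else 0) ≤ 0 := by
  by_cases hi : i ∈ s
  · rw [if_pos hi]
    exact mul_nonpos_of_nonneg_of_nonpos (by linarith [hs i hi]) (by linarith [hq1 i])
  · rw [if_neg hi, sub_zero]
    exact mul_nonpos_of_nonpos_of_nonneg (by linarith [hsc i hi]) (hq0 i)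

theorem sum_mul_le_sum_of_threshold [Fintype ι] (hc : 0 ≤ c) (hs : ∀ i ∈ s, c ≤ w i)
    (hsc : ∀ i ∉ s, w i ≤ c) (hq0 : ∀ i, 0 ≤ q i) (hq1 : ∀ i, q i ≤ 1) (hq : ∑ i, q i ≤ #s) :
    ∑ i, w i * q i ≤ ∑ i ∈ s, w i := by
  have h := Finset.sum_nonpos fun i (_ : i ∈ univ) => sub_mul_sub_ite_mem_nonpos hs hsc hq0 hq1 i
  rw [sum_sub_mul_sub_ite_mem] at h
  nlinarith

theorem eq_ite_mem_of_sum_mul_eq [Fintype ι] (hc : 0 ≤ c) (hs : ∀ i ∈ s, c < w i)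
    (hsc : ∀ i ∉ s, w i < c) (hq0 : ∀ i, 0 ≤ q i) (hq1 : ∀ i, q i ≤ 1) (hq : ∑ i, q i ≤ #s)
    (heq : ∑ i, w i * q i = ∑ i ∈ s, w i) (i : ι) : q i = if i ∈ s then 1 else 0 := by
  have hterm := sub_mul_sub_ite_mem_nonpos (fun i hi => (hs i hi).le) (fun i hi => (hsc i hi).le)
    hq0 hq1
  have hsum : ∑ i, (w i - c) * (q i - if i ∈ s then 1 else 0) = 0 := by
    refine le_antisymm (Finset.sum_nonpos fun i _ => hterm i) ?_
    rw [sum_sub_mul_sub_ite_mem, heq]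
    nlinarith
  have hi := (Finset.sum_eq_zero_iff_of_nonpos fun i _ => hterm i).1 hsum i (mem_univ i)
  have hwc : w i - c ≠ 0 := by
    by_cases h : i ∈ s
    · linarith [hs i h]
    · linarith [hsc i h]
  exact sub_eq_zero.1 ((mul_eq_zero.1 hi).resolve_left hwc)

end Threshold

namespace Matrix

section Projection

variable {m : Type*} [Fintype m] {P : Matrix m m ℝ}

theorem IsSymm.sum_sq_apply (hP : P.IsSymm) (hP' : IsIdempotentElem P) (j : m) :
    ∑ i, P i j ^ 2 = P j j := by
  conv_rhs => rw [← hP'.eq]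
  rw [mul_apply]
  refine Finset.sum_congr rfl fun i _ => ?_
  rw [sq, hP.apply j i]

theorem IsSymm.diag_nonneg (hP : P.IsSymm) (hP' : IsIdempotentElem P) (j : m) : 0 ≤ P j j := by
  rw [← hP.sum_sq_apply hP' j]
  positivity

theorem IsSymm.diag_le_one (hP : P.IsSymm) (hP' : IsIdempotentElem P) (j : m) : P j j ≤ 1 := by
  have h : P j j ^ 2 ≤ P j j := calc
    P j j ^ 2 ≤ ∑ i, P i j ^ 2 :=
      Finset.single_le_sum (f := fun i => P i j ^ 2) (fun i _ => sq_nonneg _) (mem_univ j)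
    _ = P j j := hP.sum_sq_apply hP' j
  nlinarith [hP.diag_nonneg hP' j]

theorem IsSymm.apply_eq_zero_of_diag_eq_zero (hP : P.IsSymm) (hP' : IsIdempotentElem P) {j : m}
    (hj : P j j = 0) (i : m) : P i j = 0 := by
  have h := hP.sum_sq_apply hP' j
  rw [hj, Finset.sum_eq_zero_iff_of_nonneg fun i _ => sq_nonneg _] at h
  exact pow_eq_zero_iff two_ne_zero |>.1 (h i (mem_univ i))

variable [DecidableEq m] {n : Type*} [Fintype n]

theorem exists_isSymm_isIdempotentElem_mul_eq_self [DecidableEq n] (Y : Matrix m n ℝ) :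
    ∃ P : Matrix m m ℝ, P.IsSymm ∧ IsIdempotentElem P ∧ P * Y = Y ∧ P.trace = Y.rank := by
  let b := EuclideanSpace.basisFun m ℝ
  let b' := EuclideanSpace.basisFun n ℝ
  let W := LinearMap.range (toLin b'.toBasis b.toBasis Y)
  let T : EuclideanSpace ℝ m →ₗ[ℝ] EuclideanSpace ℝ m := W.starProjection
  have hT : LinearMap.IsProj W T :=
    ⟨fun x => W.starProjection_apply_mem x, fun x hx => W.starProjection_eq_self_iff.2 hx⟩
  refine ⟨T.toMatrix b.toBasis b.toBasis, ?_, ?_, ?_, ?_⟩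
  · exact (LinearMap.isHermitian_toMatrix_iff b).2 W.starProjection_isSymmetric
  · rw [IsIdempotentElem, ← LinearMap.toMatrix_mul]
    exact congrArg _ (congrArg ContinuousLinearMap.toLinearMap W.isIdempotentElem_starProjection.eq)
  · have hfix : T ∘ₗ toLin b'.toBasis b.toBasis Y = toLin b'.toBasis b.toBasis Y :=
      LinearMap.ext fun x => hT.map_id _ (LinearMap.mem_range_self _ x)
    conv_lhs => rw [← LinearMap.toMatrix_toLin b'.toBasis b.toBasis Y]
    rw [← LinearMap.toMatrix_comp, hfix, LinearMap.toMatrix_toLin]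
  · rw [← LinearMap.trace_eq_matrix_trace, hT.trace,
      rank_eq_finrank_range_toLin Y b.toBasis b'.toBasis]

theorem IsSymm.trace_transpose_mul_eq_zero (hP : P.IsSymm) (hP' : IsIdempotentElem P)
    (B C : Matrix m n ℝ) : ((B - P * B)ᵀ * (P * C)).trace = 0 := by
  have h : (B - P * B)ᵀ * (P * C) = Bᵀ * ((1 - P) * P) * C := by
    rw [show B - P * B = (1 - P) * B by rw [Matrix.sub_mul, Matrix.one_mul], transpose_mul,
      transpose_sub, transpose_one, hP.eq]
    simp only [Matrix.mul_assoc]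
  rw [h, Matrix.sub_mul, Matrix.one_mul, hP'.eq, sub_self, Matrix.mul_zero, Matrix.zero_mul,
    trace_zero]

theorem IsSymm.frobSq_sub_mul_self (hP : P.IsSymm) (hP' : IsIdempotentElem P) (A : Matrix m n ℝ) :
    frobSq (A - P * A) = frobSq A - (P * (A * Aᵀ)).trace := by
  have h := frobSq_add (hP.trace_transpose_mul_eq_zero hP' A A)
  rw [sub_add_cancel] at h
  have hPA : frobSq (P * A) = (P * (A * Aᵀ)).trace := by
    rw [frobSq, transpose_mul, hP.eq, Matrix.mul_assoc, ← Matrix.mul_assoc P, hP'.eq,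
      trace_mul_comm, Matrix.mul_assoc]
  linarith

theorem IsSymm.frobSq_sub_eq_add (hP : P.IsSymm) (hP' : IsIdempotentElem P) (A : Matrix m n ℝ)
    {Y : Matrix m n ℝ} (hY : P * Y = Y) :
    frobSq (A - Y) = frobSq (A - P * A) + frobSq (P * A - Y) := by
  have h := frobSq_add (hP.trace_transpose_mul_eq_zero hP' A (A - Y))
  rwa [Matrix.mul_sub, hY, sub_add_sub_cancel] at h

end Projection

def coordProj {m : Type*} [DecidableEq m] (s : Finset m) : Matrix m m ℝ :=
  diagonal fun i => if i ∈ s then 1 else 0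

theorem isSymm_coordProj {m : Type*} [DecidableEq m] (s : Finset m) : (coordProj s).IsSymm :=
  diagonal_transpose _

section CoordProj

variable {m n : Type*} [Fintype m] [DecidableEq m] [Fintype n]

theorem isIdempotentElem_coordProj (s : Finset m) : IsIdempotentElem (coordProj s) := by
  rw [IsIdempotentElem, coordProj, diagonal_mul_diagonal]
  congr 1
  ext i
  split_ifs <;> norm_num

theorem rank_coordProj (s : Finset m) : (coordProj s).rank = #s := by
  classical
  rw [coordProj, rank_diagonal, Fintype.card_subtype]
  congr 1
  ext i
  simp

theorem IsSymm.eq_coordProj {P : Matrix m m ℝ} (hP : P.IsSymm) (hP' : IsIdempotentElem P)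
    {s : Finset m} (hdiag : ∀ i, P i i = if i ∈ s then 1 else 0) : P = coordProj s := by
  ext i j
  by_cases hj : j ∈ s
  · have hQ : (1 - P) j j = 0 := by simp [hdiag j, hj]
    have := (isSymm_one.sub hP).apply_eq_zero_of_diag_eq_zero hP'.one_sub hQ i
    rw [sub_apply, sub_eq_zero] at this
    rw [← this, coordProj, diagonal_apply, one_apply]
    split_ifs with hij <;> simp_all
  · rw [hP.apply_eq_zero_of_diag_eq_zero hP' ((hdiag j).trans (if_neg hj)) i, coordProj,
      diagonal_apply]
    split_ifs with hij <;> simp_all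

theorem IsSymm.frobSq_sub_mul_self_of_mul_transpose_eq_diagonal {P : Matrix m m ℝ}
    (hP : P.IsSymm) (hP' : IsIdempotentElem P) {A : Matrix m n ℝ} {w : m → ℝ}
    (hA : A * Aᵀ = diagonal w) : frobSq (A - P * A) = frobSq A - ∑ i, w i * P i i := by
  rw [hP.frobSq_sub_mul_self hP', hA]
  simp only [trace, Matrix.diag, mul_diagonal, mul_comm]

variable {A : Matrix m n ℝ} {w : m → ℝ} {s : Finset m} {c : ℝ}

theorem frobSq_sub_coordProj_mul (hA : A * Aᵀ = diagonal w) (s : Finset m) :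
    frobSq (A - coordProj s * A) = frobSq A - ∑ i ∈ s, w i := by
  rw [(isSymm_coordProj s).frobSq_sub_mul_self_of_mul_transpose_eq_diagonal
    (isIdempotentElem_coordProj s) hA]
  simp [coordProj, Finset.sum_ite_mem]

theorem exists_frobSq_sub_eq [DecidableEq n] (hA : A * Aᵀ = diagonal w) (Y : Matrix m n ℝ) :
    ∃ P : Matrix m m ℝ, P.IsSymm ∧ IsIdempotentElem P ∧ ∑ i, P i i = Y.rank ∧
      frobSq (A - Y) = frobSq A - ∑ i, w i * P i i + frobSq (P * A - Y) := by
  obtain ⟨P, hP, hP', hPY, htr⟩ := exists_isSymm_isIdempotentElem_mul_eq_self Y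
  refine ⟨P, hP, hP', htr, ?_⟩
  rw [hP.frobSq_sub_eq_add hP' A hPY,
    hP.frobSq_sub_mul_self_of_mul_transpose_eq_diagonal hP' hA]

theorem frobSq_sub_coordProj_mul_le [DecidableEq n] (hA : A * Aᵀ = diagonal w) (hc : 0 ≤ c)
    (hs : ∀ i ∈ s, c ≤ w i) (hsc : ∀ i ∉ s, w i ≤ c) {Y : Matrix m n ℝ} (hY : Y.rank ≤ #s) :
    frobSq (A - coordProj s * A) ≤ frobSq (A - Y) := by
  obtain ⟨P, hP, hP', htr, hY_eq⟩ := exists_frobSq_sub_eq hA Y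
  have hsum := sum_mul_le_sum_of_threshold hc hs hsc (hP.diag_nonneg hP') (hP.diag_le_one hP')
    (by rw [htr]; exact_mod_cast hY)
  rw [frobSq_sub_coordProj_mul hA s, hY_eq]
  linarith [frobSq_nonneg (P * A - Y)]

theorem eq_coordProj_mul_of_frobSq_sub_eq [DecidableEq n] (hA : A * Aᵀ = diagonal w)
    (hc : 0 ≤ c) (hs : ∀ i ∈ s, c < w i) (hsc : ∀ i ∉ s, w i < c) {Y : Matrix m n ℝ}
    (hY : Y.rank ≤ #s) (heq : frobSq (A - Y) = frobSq (A - coordProj s * A)) :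
    Y = coordProj s * A := by
  obtain ⟨P, hP, hP', htr, hY_eq⟩ := exists_frobSq_sub_eq hA Y
  have hq : ∑ i, P i i ≤ #s := by rw [htr]; exact_mod_cast hY
  have hsum := sum_mul_le_sum_of_threshold hc (fun i hi => (hs i hi).le)
    (fun i hi => (hsc i hi).le) (hP.diag_nonneg hP') (hP.diag_le_one hP') hq
  rw [frobSq_sub_coordProj_mul hA s, hY_eq] at heq
  have hres := frobSq_nonneg (P * A - Y)
  have hPs : P = coordProj s := hP.eq_coordProj hP' fun i =>
    eq_ite_mem_of_sum_mul_eq hc hs hsc (hP.diag_nonneg hP') (hP.diag_le_one hP') hq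
      (by linarith) i
  have hPAY : P * A - Y = 0 := frobSq_eq_zero_iff.1 (by linarith)
  rw [← hPs, ← sub_eq_zero.1 hPAY]

end CoordProj

end Matrix

theorem sum_ite_val_eq {n : ℕ} (a : ℕ) (f : Fin n → ℝ) :
    ∑ j : Fin n, (if a = (j : ℕ) then f j else 0) = if h : a < n then f ⟨a, h⟩ else 0 := by
  split_ifs with h
  · rw [Finset.sum_eq_single_of_mem (⟨a, h⟩ : Fin n) (mem_univ _) fun j _ hj => if_neg ?_]
    · simp
    · exact fun ha => hj (Fin.ext ha.symm)
  · exact Finset.sum_eq_zero fun j _ => if_neg fun ha : a = j => h (ha ▸ j.2)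

section RectangularDiagonal

variable {m n : ℕ} {S : Matrix (Fin m) (Fin n) ℝ} {σ : ℕ → ℝ}

theorem mul_transpose_eq_diagonal_of_apply_eq_ite
    (hS : ∀ i j, S i j = if (i : ℕ) = (j : ℕ) then σ i else 0) :
    S * Sᵀ = diagonal fun i : Fin m => if (i : ℕ) < n then σ i ^ 2 else 0 := by
  ext a b
  simp only [mul_apply, transpose_apply, hS, ite_mul, zero_mul, sum_ite_val_eq, diagonal_apply]
  split_ifs <;> simp_all [sq, Fin.ext_iff]

theorem mul_mul_transpose_apply_of_apply_eq_ite
    (hS : ∀ i j, S i j = if (i : ℕ) = (j : ℕ) then σ i else 0) (U : Matrix (Fin m) (Fin m) ℝ)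
    (V : Matrix (Fin n) (Fin n) ℝ) (i : Fin m) (j : Fin n) :
    (U * S * Vᵀ) i j = ∑ a : Fin m, if h : (a : ℕ) < n then σ a * (U i a * V j ⟨a, h⟩) else 0 := by
  simp only [mul_apply, transpose_apply, hS, Finset.sum_mul]
  rw [Finset.sum_comm]
  refine Finset.sum_congr rfl fun a _ => ?_
  simp only [mul_ite, mul_zero, ite_mul, zero_mul, sum_ite_val_eq]
  split_ifs <;> ring

theorem coordProj_mul_apply_of_apply_eq_ite
    (hS : ∀ i j, S i j = if (i : ℕ) = (j : ℕ) then σ i else 0) (K : ℕ) (i : Fin m) (j : Fin n) :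
    (coordProj ({i | (i : ℕ) < K} : Finset (Fin m)) * S) i j =
      if (i : ℕ) = (j : ℕ) then (if (i : ℕ) < K then σ i else 0) else 0 := by
  simp only [coordProj, diagonal_mul, hS, Finset.mem_filter, Finset.mem_univ, true_and]
  split_ifs <;> simp

theorem sum_smul_vecMulVec_eq_mul_coordProj_mul
    (hS : ∀ i j, S i j = if (i : ℕ) = (j : ℕ) then σ i else 0) (U : Matrix (Fin m) (Fin m) ℝ)
    (V : Matrix (Fin n) (Fin n) ℝ) {K : ℕ} (hKm : K ≤ m) (hKn : K ≤ n) :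
    ∑ k : Fin K,
        σ k • vecMulVec (fun i => U i (Fin.castLE hKm k)) (fun j => V j (Fin.castLE hKn k)) =
      U * (coordProj ({i | (i : ℕ) < K} : Finset (Fin m)) * S) * Vᵀ := by
  ext i j
  rw [mul_mul_transpose_apply_of_apply_eq_ite (σ := fun t => if t < K then σ t else 0)
    (coordProj_mul_apply_of_apply_eq_ite hS K), Matrix.sum_apply]
  refine Fintype.sum_of_injective (Fin.castLE hKm) (Fin.castLE_injective hKm) _ _ ?_ fun k => ?_
  · intro a ha
    have : ¬ (a : ℕ) < K := fun h => ha ⟨⟨a, h⟩, rfl⟩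
    simp [this]
  · simp [lt_of_lt_of_le k.2 hKn, vecMulVec_apply, Fin.castLE]

end RectangularDiagonal

theorem exists_sq_threshold {N K : ℕ} {σ : ℕ → ℝ} (hσmono : ∀ i j : ℕ, i ≤ j → j < N → σ j ≤ σ i)
    (hσnonneg : ∀ i : ℕ, i < N → 0 ≤ σ i) (hK : K < N) (hgap : σ K < σ (K - 1)) :
    ∃ c, 0 < c ∧ (∀ t < K, c < σ t ^ 2) ∧ ∀ t, K ≤ t → t < N → σ t ^ 2 < c := by
  have hσK := hσnonneg K hK
  have hsq : σ K ^ 2 < σ (K - 1) ^ 2 := by nlinarith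
  refine ⟨(σ K ^ 2 + σ (K - 1) ^ 2) / 2, by nlinarith, fun t ht => ?_, fun t hKt htN => ?_⟩
  · have := hσmono t (K - 1) (by omega) (by omega)
    nlinarith
  · have := hσmono K t hKt htN
    nlinarith [hσnonneg t htN]

theorem exists_sq_threshold_fin {m n K : ℕ} {σ : ℕ → ℝ}
    (hσmono : ∀ i j : ℕ, i ≤ j → j < min m n → σ j ≤ σ i)
    (hσnonneg : ∀ i : ℕ, i < min m n → 0 ≤ σ i) (hK : K < min m n) (hgap : σ K < σ (K - 1)) :
    ∃ c, 0 ≤ c ∧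
      (∀ i ∈ ({i | (i : ℕ) < K} : Finset (Fin m)), c < if (i : ℕ) < n then σ i ^ 2 else 0) ∧
      ∀ i ∉ ({i | (i : ℕ) < K} : Finset (Fin m)), (if (i : ℕ) < n then σ i ^ 2 else 0) < c := by
  obtain ⟨c, hc, hlt, hgt⟩ := exists_sq_threshold hσmono hσnonneg hK hgap
  refine ⟨c, hc.le, fun i hi => ?_, fun i hi => ?_⟩
  · simp only [Finset.mem_filter, Finset.mem_univ, true_and] at hi
    rw [if_pos (by omega)]
    exact hlt i hi
  · simp only [Finset.mem_filter, Finset.mem_univ, true_and, not_lt] at hi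
    split_ifs with hin
    · exact hgt i hi (lt_min i.2 hin)
    · exact hc

theorem rank_mul_mul_le {l m n o : Type*} [Fintype m] [Fintype n] [Fintype o] (B : Matrix l m ℝ)
    (M : Matrix m n ℝ) (C : Matrix n o ℝ) : (B * M * C).rank ≤ M.rank :=
  (rank_mul_le_left _ _).trans (rank_mul_le_right _ _)

theorem mul_mul_transpose_mul_mul_transpose {m n : Type*} [Fintype m] [DecidableEq m] [Fintype n]
    [DecidableEq n] {U : Matrix m m ℝ} {V : Matrix n n ℝ} (hU : Uᵀ * U = 1) (hV : Vᵀ * V = 1)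
    (X : Matrix m n ℝ) : U * (Uᵀ * X * V) * Vᵀ = X := by
  simp only [Matrix.mul_assoc, mul_eq_one_comm.1 hV, Matrix.mul_one]
  rw [← Matrix.mul_assoc, mul_eq_one_comm.1 hU, Matrix.one_mul]

theorem frob_sub_eq_frob_sub_mul_mul {m n : ℕ} {U : Matrix (Fin m) (Fin m) ℝ}
    {V : Matrix (Fin n) (Fin n) ℝ} (hU : Uᵀ * U = 1) (hV : Vᵀ * V = 1)
    (S X : Matrix (Fin m) (Fin n) ℝ) : frob (U * S * Vᵀ - X) = frob (S - Uᵀ * X * V) := by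
  rw [← frob_orthogonal_mul_mul hU hV (S - Uᵀ * X * V), Matrix.mul_sub, Matrix.sub_mul,
    mul_mul_transpose_mul_mul_transpose hU hV]

-- `σ` is indexed from `0`, so `hgap` is the hypothesis `σ_K > σ_{K+1}` of the informal statement.
theorem eckart_young_mirsky_uniqueness_general {m n : ℕ}
    (A : Matrix (Fin m) (Fin n) ℝ)
    (U : Matrix (Fin m) (Fin m) ℝ) (V : Matrix (Fin n) (Fin n) ℝ)
    (S : Matrix (Fin m) (Fin n) ℝ) (σ : ℕ → ℝ) (K : ℕ)
    (hU : Uᵀ * U = 1) (hV : Vᵀ * V = 1)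
    (hA : A = U * S * Vᵀ)
    (hS : ∀ (i : Fin m) (j : Fin n), S i j = if (i : ℕ) = (j : ℕ) then σ (i : ℕ) else 0)
    (hσmono : ∀ i j : ℕ, i ≤ j → j < min m n → σ j ≤ σ i)
    (hσnonneg : ∀ i : ℕ, i < min m n → 0 ≤ σ i)
    (hK : K < min m n)
    (hgap : σ K < σ (K - 1))
    (Xstar : Matrix (Fin m) (Fin n) ℝ)
    (hXstar : Xstar = ∑ k : Fin K,
      σ (k : ℕ) •
        Matrix.vecMulVec
          (fun i => U i ⟨(k : ℕ), lt_of_lt_of_le k.2 ((le_of_lt hK).trans (min_le_left m n))⟩)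
          (fun j => V j ⟨(k : ℕ), lt_of_lt_of_le k.2 ((le_of_lt hK).trans (min_le_right m n))⟩)) :
    (Xstar.rank ≤ K ∧
      ∀ X : Matrix (Fin m) (Fin n) ℝ, X.rank ≤ K →
        frob (A - Xstar) ≤ frob (A - X)) ∧
      ∀ X : Matrix (Fin m) (Fin n) ℝ, X.rank ≤ K →
        (∀ Z : Matrix (Fin m) (Fin n) ℝ, Z.rank ≤ K → frob (A - X) ≤ frob (A - Z)) →
        X = Xstar := by
  set s : Finset (Fin m) := {i | (i : ℕ) < K}
  have hKm : K ≤ m := hK.le.trans (min_le_left m n)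
  have hKn : K ≤ n := hK.le.trans (min_le_right m n)
  have hs : #s = K := by simp [s, Fin.card_filter_val_lt, hKm]
  have hSS := mul_transpose_eq_diagonal_of_apply_eq_ite hS
  obtain ⟨c, hc, hcs, hcsc⟩ := exists_sq_threshold_fin hσmono hσnonneg hK hgap
  have hXstar' : Xstar = U * (coordProj s * S) * Vᵀ :=
    hXstar.trans (sum_smul_vecMulVec_eq_mul_coordProj_mul hS U V hKm hKn)
  have hdist (X) : frob (A - X) = frob (S - Uᵀ * X * V) :=
    hA ▸ frob_sub_eq_frob_sub_mul_mul hU hV S X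
  have hrank (X : Matrix (Fin m) (Fin n) ℝ) (hX : X.rank ≤ K) : (Uᵀ * X * V).rank ≤ #s :=
    hs ▸ (rank_mul_mul_le _ _ _).trans hX
  have hbest : frob (A - Xstar) = frob (S - coordProj s * S) := by
    rw [hA, hXstar', ← Matrix.sub_mul, ← Matrix.mul_sub, frob_orthogonal_mul_mul hU hV]
  have hXstar_rank : Xstar.rank ≤ K := by
    rw [hXstar', ← hs, ← rank_coordProj s]
    exact (rank_mul_mul_le _ _ _).trans (rank_mul_le_left _ _)
  have hopt (X) (hX : X.rank ≤ K) : frob (A - Xstar) ≤ frob (A - X) := by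
    rw [hbest, hdist, frob_le_frob_iff]
    exact frobSq_sub_coordProj_mul_le hSS hc (fun i hi => (hcs i hi).le)
      (fun i hi => (hcsc i hi).le) (hrank X hX)
  refine ⟨⟨hXstar_rank, hopt⟩, fun X hX hXmin => ?_⟩
  have hle := hXmin Xstar hXstar_rank
  have hge := hopt X hX
  rw [hbest, hdist, frob_le_frob_iff] at hle hge
  rw [← mul_mul_transpose_mul_mul_transpose hU hV X, hXstar',
    eq_coordProj_mul_of_frobSq_sub_eq hSS hc hcs hcsc (hrank X hX) (le_antisymm hle hge)]

/-- Eckart–Young–Mirsky theorem (uniqueness part): if `σ_K > σ_{K+1}`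
(in 1-based indexing, i.e. `σ (K-1) > σ K` in the 0-based indexing used here),
then the truncated SVD `X* = ∑_{k<K} σ_k u_k v_kᵀ` is the unique minimizer of
`‖A − X‖_F` over matrices `X` of rank at most `K`. -/
theorem eckart_young_mirsky_uniqueness {m n : ℕ}
    (A : Matrix (Fin m) (Fin n) ℝ)
    (U : Matrix (Fin m) (Fin m) ℝ) (V : Matrix (Fin n) (Fin n) ℝ)
    (S : Matrix (Fin m) (Fin n) ℝ) (σ : ℕ → ℝ) (K : ℕ)
    (hU : Uᵀ * U = 1) (hV : Vᵀ * V = 1)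
    (hA : A = U * S * Vᵀ)
    (hS : ∀ (i : Fin m) (j : Fin n), S i j = if (i : ℕ) = (j : ℕ) then σ (i : ℕ) else 0)
    (hσmono : ∀ i j : ℕ, i ≤ j → j < min m n → σ j ≤ σ i)
    (hσnonneg : ∀ i : ℕ, i < min m n → 0 ≤ σ i)
    (hK1 : 1 ≤ K) (hK : K < min m n)
    (hgap : σ K < σ (K - 1))
    (Xstar : Matrix (Fin m) (Fin n) ℝ)
    (hXstar : Xstar = ∑ k : Fin K,
      σ (k : ℕ) •
        Matrix.vecMulVec
          (fun i => U i ⟨(k : ℕ), lt_of_lt_of_le k.2 ((le_of_lt hK).trans (min_le_left m n))⟩)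
          (fun j => V j ⟨(k : ℕ), lt_of_lt_of_le k.2 ((le_of_lt hK).trans (min_le_right m n))⟩)) :
    (Xstar.rank ≤ K ∧
      ∀ X : Matrix (Fin m) (Fin n) ℝ, X.rank ≤ K →
        frob (A - Xstar) ≤ frob (A - X)) ∧
      ∀ X : Matrix (Fin m) (Fin n) ℝ, X.rank ≤ K →
        (∀ Z : Matrix (Fin m) (Fin n) ℝ, Z.rank ≤ K → frob (A - X) ≤ frob (A - Z)) →
        X = Xstar :=
  eckart_young_mirsky_uniqueness_general A U V S σ K hU hV hA hS hσmono hσnonneg hK hgap Xstar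
    hXstar
end

section
/- Let X, Y, U : ℕ → (real m×n matrices) be sequences satisfying U(k+1) = U(k) + X(k+1) − Y(k+1) for all k, and suppose U(k) converges. Let g be a continuous function from real m×n matrices to ℝ with g(Y(k)) ≤ 0 for all k, and let K be a positive integer with rank(X(k)) ≤ K for all k. If X(k) converges to a matrix X*, then g(X*) ≤ 0 and rank(X*) ≤ K; that is, X* is a feasible point of the problem RLRA. -/
/-! Since `Y (k+1) = X (k+1) - (U (k+1) - U k)` and the dual increments tend to zero, `Y` has the
same limit as `X`; so `X*` is a limit of points of the closed set `{g ≤ 0}`. It is also a limit of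
points of `{rank ≤ K}`, which is closed because `rank M > K` is witnessed by a nonzero
`(K+1) × (K+1)` minor, and minors are continuous. -/

open Matrix Filter

lemma abs_apply_le_frob {m n : ℕ} (M : Matrix (Fin m) (Fin n) ℝ) (i : Fin m) (j : Fin n) :
    |M i j| ≤ frob M := by
  have hsq : M i j ^ 2 ≤ ∑ i', ∑ j', M i' j' ^ 2 :=
    calc M i j ^ 2 ≤ ∑ j', M i j' ^ 2 :=
          Finset.single_le_sum (fun j' _ => sq_nonneg (M i j')) (Finset.mem_univ j)
      _ ≤ ∑ i', ∑ j', M i' j' ^ 2 :=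
          Finset.single_le_sum (f := fun i' => ∑ j', M i' j' ^ 2)
            (fun i' _ => Finset.sum_nonneg fun j' _ => sq_nonneg _) (Finset.mem_univ i)
  calc |M i j| = Real.sqrt (M i j ^ 2) := (Real.sqrt_sq_eq_abs _).symm
    _ ≤ frob M := Real.sqrt_le_sqrt hsq

lemma tendsto_of_tendsto_frob_sub {α : Type*} {l : Filter α} {m n : ℕ}
    {A : α → Matrix (Fin m) (Fin n) ℝ} {L : Matrix (Fin m) (Fin n) ℝ}
    (h : Tendsto (fun k => frob (A k - L)) l (nhds 0)) : Tendsto A l (nhds L) := by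
  refine tendsto_pi_nhds.mpr fun i => tendsto_pi_nhds.mpr fun j => ?_
  have hsub : Tendsto (fun k => A k i j - L i j) l (nhds 0) :=
    squeeze_zero_norm (fun k => abs_apply_le_frob (A k - L) i j) h
  simpa using hsub.add_const (L i j)

lemma tendsto_of_dual_update {G : Type*} [AddCommGroup G] [TopologicalSpace G]
    [IsTopologicalAddGroup G] {X Y U : ℕ → G} {x u : G}
    (hU : ∀ k, U (k + 1) = U k + X (k + 1) - Y (k + 1))
    (hUconv : Tendsto U atTop (nhds u)) (hXconv : Tendsto X atTop (nhds x)) :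
    Tendsto Y atTop (nhds x) := by
  have hY : ∀ k, Y (k + 1) = X (k + 1) - (U (k + 1) - U k) := fun k => by
    rw [hU k]; abel
  have hlim : Tendsto (fun k => X (k + 1) - (U (k + 1) - U k)) atTop (nhds (x - (u - u))) :=
    (hXconv.comp (tendsto_add_atTop_nat 1)).sub
      ((hUconv.comp (tendsto_add_atTop_nat 1)).sub hUconv)
  rw [sub_self, sub_zero] at hlim
  exact (tendsto_add_atTop_iff_nat 1).mp (by simpa only [hY] using hlim)

namespace Matrix

variable {K m n : Type*}

lemma exists_linearIndependent_rows_of_le_rank [Field K] [Fintype m] [Fintype n]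
    (M : Matrix m n K) {r : ℕ} (hr : r ≤ M.rank) :
    ∃ s : Fin r → m, LinearIndependent K (M.submatrix s id).row := by
  obtain ⟨κ, a, ha, hspan, hli⟩ := exists_linearIndependent' K M.row
  have : Finite κ := Finite.of_injective a ha
  cases nonempty_fintype κ
  have hcard : Fintype.card κ = M.rank := by
    rw [rank_eq_finrank_span_row, ← hspan, finrank_span_eq_card hli]
  obtain ⟨e⟩ : Nonempty (Fin r ↪ κ) :=
    Function.Embedding.nonempty_of_card_le (by rwa [Fintype.card_fin, hcard])
  exact ⟨a ∘ e, hli.comp e e.injective⟩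

lemma exists_submatrix_det_ne_zero_of_le_rank [Field K] [Fintype m] [Fintype n]
    (M : Matrix m n K) {r : ℕ} (hr : r ≤ M.rank) :
    ∃ (s : Fin r → m) (t : Fin r → n), (M.submatrix s t).det ≠ 0 := by
  obtain ⟨s, hs⟩ := M.exists_linearIndependent_rows_of_le_rank hr
  have hrows : r ≤ (M.submatrix s id)ᵀ.rank := by
    rw [rank_transpose, hs.rank_matrix, Fintype.card_fin]
  obtain ⟨t, ht⟩ := (M.submatrix s id)ᵀ.exists_linearIndependent_rows_of_le_rank hrows
  refine ⟨s, t, fun hdet => ?_⟩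
  have hunit : IsUnit (M.submatrix s t)ᵀ := linearIndependent_rows_iff_isUnit.mp ht
  rw [isUnit_iff_isUnit_det, det_transpose, hdet] at hunit
  exact not_isUnit_zero hunit

lemma card_le_rank_of_submatrix_det_ne_zero [CommRing K] [IsDomain K] [Fintype n] {ι : Type*}
    [Fintype ι]
    [DecidableEq ι] (M : Matrix m n K) {s : ι → m} {t : ι → n}
    (hdet : (M.submatrix s t).det ≠ 0) :
    Fintype.card ι ≤ M.rank :=
  rank_of_det_ne_zero hdet ▸ M.rank_submatrix_le s t

lemma isClosed_setOf_rank_le [Field K] [TopologicalSpace K] [IsTopologicalRing K] [T1Space K]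
    [Fintype m] [Fintype n] (r : ℕ) : IsClosed {M : Matrix m n K | M.rank ≤ r} := by
  refine isOpen_compl_iff.mp (isOpen_iff_forall_mem_open.mpr fun M hM => ?_)
  obtain ⟨s, t, hdet⟩ :=
    M.exists_submatrix_det_ne_zero_of_le_rank (r := r + 1) (Nat.lt_of_not_le hM)
  refine ⟨{N | (N.submatrix s t).det ≠ 0}, fun N hN => ?_, ?_, hdet⟩
  · have hcard := N.card_le_rank_of_submatrix_det_ne_zero hN
    rw [Fintype.card_fin] at hcard
    exact Nat.not_le_of_lt hcard
  · exact isOpen_ne_fun (continuous_id.matrix_submatrix s t).matrix_det continuous_const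

end Matrix

theorem admm_limit_feasible_general {m n : ℕ}
    (X Y U : ℕ → Matrix (Fin m) (Fin n) ℝ)
    (hU : ∀ k, U (k + 1) = U k + X (k + 1) - Y (k + 1))
    (hUconv : ∃ L : Matrix (Fin m) (Fin n) ℝ,
      Tendsto (fun k => frob (U k - L)) atTop (nhds 0))
    (g : Matrix (Fin m) (Fin n) ℝ → ℝ) (hg : Continuous g)
    (hgY : ∀ k, g (Y k) ≤ 0)
    (K : ℕ) (hrank : ∀ k, (X k).rank ≤ K)
    (Xstar : Matrix (Fin m) (Fin n) ℝ)
    (hXconv : Tendsto (fun k => frob (X k - Xstar)) atTop (nhds 0)) :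
    g Xstar ≤ 0 ∧ Xstar.rank ≤ K := by
  obtain ⟨L, hL⟩ := hUconv
  have hX : Tendsto X atTop (nhds Xstar) := tendsto_of_tendsto_frob_sub hXconv
  have hY : Tendsto Y atTop (nhds Xstar) :=
    tendsto_of_dual_update hU (tendsto_of_tendsto_frob_sub hL) hX
  exact ⟨le_of_tendsto ((hg.tendsto Xstar).comp hY) (Eventually.of_forall hgY),
    (isClosed_setOf_rank_le K).mem_of_tendsto hX (Eventually.of_forall hrank)⟩

/-- Feasibility of the limit: if the ADMM dual variable converges, every `Y(k)`
satisfies the convex constraint `g ≤ 0`, every `X(k)` satisfies the rank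
constraint, and `X(k)` converges to `X*`, then `X*` is feasible for RLRA, i.e.
`g X* ≤ 0` and `rank X* ≤ K`. -/
theorem admm_limit_feasible {m n : ℕ}
    (X Y U : ℕ → Matrix (Fin m) (Fin n) ℝ)
    (hU : ∀ k, U (k + 1) = U k + X (k + 1) - Y (k + 1))
    (hUconv : ∃ L : Matrix (Fin m) (Fin n) ℝ,
      Tendsto (fun k => frob (U k - L)) atTop (nhds 0))
    (g : Matrix (Fin m) (Fin n) ℝ → ℝ) (hg : Continuous g)
    (hgY : ∀ k, g (Y k) ≤ 0)
    (K : ℕ) (hK : 0 < K) (hrank : ∀ k, (X k).rank ≤ K)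
    (Xstar : Matrix (Fin m) (Fin n) ℝ)
    (hXconv : Tendsto (fun k => frob (X k - Xstar)) atTop (nhds 0)) :
    g Xstar ≤ 0 ∧ Xstar.rank ≤ K :=
  admm_limit_feasible_general X Y U hU hUconv g hg hgY K hrank Xstar hXconv
end

section
/- Let E be a complete real inner product space, let S ⊆ E be a nonempty closed convex set, let D ∈ E, and let α ∈ [0, 1). Let x : ℕ → E be a sequence such that for every k, x(k+1) ∈ S and ‖x(k+1) − (αx(k) + (1−α)D)‖ ≤ ‖z − (αx(k) + (1−α)D)‖ for all z ∈ S. Then ‖x(k+1) − x(k)‖ ≤ α^k·‖x(1) − x(0)‖ for all k, and the sequence x(k) converges. -/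
open Filter RealInnerProductSpace

/-- Exponential convergence of the ADMM primal iterates: if each `x(k+1)` is a
nearest point in a nonempty closed set `S` (in a complete real inner product
space) to `α x(k) + (1−α) D` with `α ∈ [0,1)`, then
`‖x(k+1) − x(k)‖ ≤ α^k ‖x(1) − x(0)‖` for all `k` and the sequence converges. -/
theorem admm_primal_exponential_convergence {E : Type*} [NormedAddCommGroup E]
    [InnerProductSpace ℝ E] [CompleteSpace E]
    (S : Set E) (hSne : S.Nonempty) (hSclosed : IsClosed S) (hSconv : Convex ℝ S)
    (D : E) (α : ℝ) (hα : α ∈ Set.Ico (0 : ℝ) 1)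
    (x : ℕ → E)
    (hmem : ∀ k, x (k + 1) ∈ S)
    (hproj : ∀ k, ∀ z ∈ S,
      ‖x (k + 1) - (α • x k + (1 - α) • D)‖ ≤ ‖z - (α • x k + (1 - α) • D)‖) :
    (∀ k, ‖x (k + 1) - x k‖ ≤ α ^ k * ‖x 1 - x 0‖) ∧
      ∃ L : E, Tendsto x atTop (nhds L) := by
  obtain ⟨hα0, hα1⟩ := hα
  -- variational inequality for each step
  have hvar : ∀ k, ∀ w ∈ S,
      ⟪(α • x k + (1 - α) • D) - x (k + 1), w - x (k + 1)⟫ ≤ 0 := by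
    intro k w hw
    set u := α • x k + (1 - α) • D
    have hne : Nonempty S := ⟨⟨x (k+1), hmem k⟩⟩
    have heq : ‖u - x (k + 1)‖ = ⨅ w : S, ‖u - w‖ := by
      apply le_antisymm
      · exact le_ciInf fun z => by
          simpa [norm_sub_rev u] using hproj k z z.2
      · have hbdd : BddBelow (Set.range fun w : S => ‖u - (w : E)‖) :=
          ⟨0, by rintro _ ⟨z, rfl⟩; exact norm_nonneg _⟩
        exact ciInf_le hbdd ⟨x (k+1), hmem k⟩
    exact (norm_eq_iInf_iff_real_inner_le_zero hSconv (hmem k)).mp heq w hw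
  -- nonexpansiveness: one-step contraction
  have hcontr : ∀ k, ‖x (k + 2) - x (k + 1)‖ ≤ α * ‖x (k + 1) - x k‖ := by
    intro k
    set u := α • x k + (1 - α) • D with hu
    set v := α • x (k+1) + (1 - α) • D with hv
    have h1 := hvar k (x (k+2)) (hmem (k+1))
    have h2 := hvar (k+1) (x (k+1)) (hmem k)
    -- ⟪u - x(k+1), x(k+2) - x(k+1)⟫ ≤ 0, ⟪v - x(k+2), x(k+1) - x(k+2)⟫ ≤ 0
    have key : ‖x (k+2) - x (k+1)‖^2 ≤ ⟪v - u, x (k+2) - x (k+1)⟫ := by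
      have e1 : ⟪u - x (k+1), x (k+2) - x (k+1)⟫ ≤ 0 := h1
      have e2 : ⟪v - x (k+2), x (k+1) - x (k+2)⟫ ≤ 0 := h2
      have e2' : ⟪x (k+2) - v, x (k+2) - x (k+1)⟫ ≤ 0 := by
        rw [show x (k+2) - v = -(v - x (k+2)) by abel,
          show x (k+2) - x (k+1) = -(x (k+1) - x (k+2)) by abel,
          inner_neg_neg (𝕜 := ℝ)]
        exact e2
      have := add_nonpos e1 e2'
      rw [← inner_add_left] at this
      have heq2 : u - x (k+1) + (x (k+2) - v) = (x (k+2) - x (k+1)) - (v - u) := by abel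
      rw [heq2, inner_sub_left] at this
      have : ⟪x (k+2) - x (k+1), x (k+2) - x (k+1)⟫ ≤ ⟪v - u, x (k+2) - x (k+1)⟫ := by
        linarith [this, real_inner_comm (v - u) (x (k+2) - x (k+1))]
      simpa [real_inner_self_eq_norm_sq] using this
    have hvu : v - u = α • (x (k+1) - x k) := by
      rw [hu, hv]; rw [smul_sub]; abel
    have hcs : ⟪v - u, x (k+2) - x (k+1)⟫ ≤ α * ‖x (k+1) - x k‖ * ‖x (k+2) - x (k+1)‖ := by
      calc ⟪v - u, x (k+2) - x (k+1)⟫ ≤ ‖v - u‖ * ‖x (k+2) - x (k+1)‖ :=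
            real_inner_le_norm _ _
        _ = α * ‖x (k+1) - x k‖ * ‖x (k+2) - x (k+1)‖ := by
            rw [hvu, norm_smul, Real.norm_eq_abs, abs_of_nonneg hα0]
    rcases eq_or_lt_of_le (norm_nonneg (x (k+2) - x (k+1))) with h0 | h0
    · rw [← h0]; positivity
    · have := le_trans key hcs
      rw [sq] at this
      exact le_of_mul_le_mul_right (by linarith) h0
  have hbound : ∀ k, ‖x (k + 1) - x k‖ ≤ α ^ k * ‖x 1 - x 0‖ := by
    intro k
    induction k with
    | zero => simp
    | succ n ih =>
      calc ‖x (n + 2) - x (n + 1)‖ ≤ α * ‖x (n + 1) - x n‖ := hcontr n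
        _ ≤ α * (α ^ n * ‖x 1 - x 0‖) := by
            exact mul_le_mul_of_nonneg_left ih hα0
        _ = α ^ (n + 1) * ‖x 1 - x 0‖ := by ring
  refine ⟨hbound, ?_⟩
  have hcauchy : CauchySeq x := by
    apply cauchySeq_of_le_geometric α ‖x 1 - x 0‖ hα1
    intro n
    rw [dist_eq_norm, norm_sub_rev]
    calc ‖x (n+1) - x n‖ ≤ α ^ n * ‖x 1 - x 0‖ := hbound n
      _ = ‖x 1 - x 0‖ * α ^ n := mul_comm _ _
  exact cauchySeq_tendsto_of_complete hcauchy
end
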